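/- arXiv:2311.14292 — 8 statements merged into one kernel-verified Lean document; each statement's English description precedes it below -/
import Mathlib

section
/- Suppose F : ℝⁿ → ℝ is differentiable with L-Lipschitz gradient (L > 0), there is l ∈ ℝ such that u ↦ F(u) + (l/2)‖u‖² is convex, and γ > 0. Let w, x, y, y⁺ ∈ ℝⁿ satisfy ∇F(y) + (1/γ)(y − w) = 0 and ∇F(y⁺) + (1/γ)(y⁺ − x) = 0, and set z := (x − w) + y (so that x = w + z − y). Then ‖y⁺ − z‖² ≤ [(−1 + 2γl) + (1 + γL)²] · ‖y⁺ − y‖². -/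
/-!
Subtracting the two optimality conditions gives `y⁺ - z = γ (∇F(y) - ∇F(y⁺))`, so
`‖y⁺ - z‖ ≤ γ L ‖y⁺ - y‖`. The claimed constant exceeds `(γ L)²` by `2γ(l + L)`, which is
nonnegative on `‖y⁺ - y‖²`: weak convexity makes `∇F + l • id` monotone, and Cauchy–Schwarz with
the Lipschitz bound caps `⟪∇F(y⁺) - ∇F(y), y⁺ - y⟫` by `L ‖y⁺ - y‖²`.
-/
open InnerProductSpace RealInnerProductSpace

section

variable {E : Type*} [NormedAddCommGroup E] [InnerProductSpace ℝ E] [CompleteSpace E]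

theorem HasGradientAt.add_const_mul_norm_sq {F : E → ℝ} {g x : E} (hF : HasGradientAt F g x)
    (c : ℝ) : HasGradientAt (fun u ↦ F u + c * ‖u‖ ^ 2) (g + (2 * c) • x) x := by
  rw [hasGradientAt_iff_hasFDerivAt] at hF ⊢
  refine (hF.add ((hasStrictFDerivAt_norm_sq x).hasFDerivAt.const_mul c)).congr_fderiv ?_
  ext v
  simp
  ring

theorem ConvexOn.inner_sub_gradient_nonneg {s : Set E} {G : E → ℝ} {x y gx gy : E}
    (hG : ConvexOn ℝ s G) (hx : x ∈ s) (hy : y ∈ s)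
    (hgx : HasGradientAt G gx x) (hgy : HasGradientAt G gy y) :
    0 ≤ ⟪gy - gx, y - x⟫ := by
  let c : ℝ →ᵃ[ℝ] E := AffineMap.lineMap x y
  have hφ : ConvexOn ℝ (Set.Icc 0 1) (G ∘ c) :=
    (hG.comp_affineMap c).subset (fun _ ht ↦ hG.1.lineMap_mem hx hy ht) (convex_Icc 0 1)
  have hφ' {t : ℝ} {g : E} (hg : HasGradientAt G g (c t)) : HasDerivAt (G ∘ c) ⟪g, y - x⟫ t := by
    simpa using hg.hasFDerivAt.comp_hasDerivAt t AffineMap.hasDerivAt_lineMap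
  have h0 := hφ.le_slope_of_hasDerivAt (by simp) (by simp) one_pos (hφ' (by simpa [c] using hgx))
  have h1 := hφ.slope_le_of_hasDerivAt (by simp) (by simp) one_pos (hφ' (by simpa [c] using hgy))
  rw [inner_sub_left]
  linarith

theorem neg_mul_norm_sq_le_inner_sub_gradient_of_convexOn_add {s : Set E} {F : E → ℝ} {l : ℝ}
    {x y gx gy : E}
    (hconv : ConvexOn ℝ s (fun u ↦ F u + (l / 2) * ‖u‖ ^ 2)) (hx : x ∈ s) (hy : y ∈ s)
    (hgx : HasGradientAt F gx x) (hgy : HasGradientAt F gy y) :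
    -(l * ‖y - x‖ ^ 2) ≤ ⟪gy - gx, y - x⟫ := by
  have h := hconv.inner_sub_gradient_nonneg hx hy
    (hgx.add_const_mul_norm_sq (l / 2)) (hgy.add_const_mul_norm_sq (l / 2))
  have hsplit : gy + (2 * (l / 2)) • y - (gx + (2 * (l / 2)) • x) = (gy - gx) + l • (y - x) := by
    module
  rw [hsplit, inner_add_left, real_inner_smul_left, real_inner_self_eq_norm_sq] at h
  linarith

end

theorem stmt_2_general {n : ℕ}
    (F : EuclideanSpace ℝ (Fin n) → ℝ)
    (F' : EuclideanSpace ℝ (Fin n) → EuclideanSpace ℝ (Fin n))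
    (L l γ : ℝ) (hγ : 0 < γ)
    (hdiff : ∀ u, HasGradientAt F (F' u) u)
    (hlip : ∀ u v, ‖F' u - F' v‖ ≤ L * ‖u - v‖)
    (hconv : ConvexOn ℝ Set.univ (fun u => F u + (l/2) * ‖u‖ ^ 2))
    (w x y yp z : EuclideanSpace ℝ (Fin n))
    (hopt : F' y + (1/γ) • (y - w) = 0)
    (hoptp : F' yp + (1/γ) • (yp - x) = 0)
    (hz : z = (x - w) + y) :
    ‖yp - z‖ ^ 2 ≤ ((-1 + 2 * γ * l) + (1 + γ * L) ^ 2) * ‖yp - y‖ ^ 2 := by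
  have hstep : yp - z = γ • (F' y - F' yp) := by
    rw [hz]
    linear_combination (norm := skip) γ • hoptp - γ • hopt
    match_scalars <;> field_simp <;> ring
  have hnorm : ‖yp - z‖ ≤ γ * (L * ‖yp - y‖) := by
    rw [hstep, norm_smul, Real.norm_of_nonneg hγ.le, norm_sub_rev yp]
    exact mul_le_mul_of_nonneg_left (hlip y yp) hγ.le
  have hcurv : 0 ≤ (l + L) * ‖yp - y‖ ^ 2 := by
    have hlow := neg_mul_norm_sq_le_inner_sub_gradient_of_convexOn_add hconv
      (Set.mem_univ y) (Set.mem_univ yp) (hdiff y) (hdiff yp)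
    have hup := (real_inner_le_norm _ _).trans
      (mul_le_mul_of_nonneg_right (hlip yp y) (norm_nonneg (yp - y)))
    linear_combination hlow + hup
  calc ‖yp - z‖ ^ 2 ≤ (γ * (L * ‖yp - y‖)) ^ 2 := pow_le_pow_left₀ (norm_nonneg _) hnorm 2
    _ ≤ _ := by linear_combination 2 * mul_nonneg hγ.le hcurv

/-- Lemma A.2 (second part): bound on `‖y⁺ - z‖²` in terms of `‖y⁺ - y‖²`, where
`y` is the `F`-proximal point of `w`, `y⁺` is the `F`-proximal point of `x`, and
`z = (x - w) + y` (so that `x = w + z - y`). -/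
theorem stmt_2 {n : ℕ}
    (F : EuclideanSpace ℝ (Fin n) → ℝ)
    (F' : EuclideanSpace ℝ (Fin n) → EuclideanSpace ℝ (Fin n))
    (L l γ : ℝ) (hL : 0 < L) (hγ : 0 < γ)
    (hdiff : ∀ u, HasGradientAt F (F' u) u)
    (hlip : ∀ u v, ‖F' u - F' v‖ ≤ L * ‖u - v‖)
    (hconv : ConvexOn ℝ Set.univ (fun u => F u + (l/2) * ‖u‖ ^ 2))
    (w x y yp z : EuclideanSpace ℝ (Fin n))
    (hopt : F' y + (1/γ) • (y - w) = 0)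
    (hoptp : F' yp + (1/γ) • (yp - x) = 0)
    (hz : z = (x - w) + y) :
    ‖yp - z‖ ^ 2 ≤ ((-1 + 2 * γ * l) + (1 + γ * L) ^ 2) * ‖yp - y‖ ^ 2 :=
  stmt_2_general F F' L l γ hγ hdiff hlip hconv w x y yp z hopt hoptp hz
end

section
/- Suppose H : ℝⁿ → ℝ is differentiable and ∇H is β-Lipschitz with 0 < β ≤ 1. Then for all vectors y, y′, z, g, g′ ∈ ℝⁿ: ⟨g′, z − y′⟩ − ⟨g, z − y⟩ ≤ ½‖g′ − ∇H(y′)‖² + ‖g − ∇H(y)‖² + H(y) − H(y′) + ((2β + 1)/2)‖y′ − y‖² + (3/2)‖y′ − z‖². -/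
/-!
Write `g = ∇H y + e` and `g' = ∇H y' + e'`. The left-hand side splits as
`⟪e', z - y'⟫ + ⟪e, y - z⟫ + ⟪∇H y' - ∇H y, z - y'⟫ - ⟪∇H y, y' - y⟫`. The first three terms are
bounded by Young's inequality, using `‖∇H y' - ∇H y‖² ≤ β² ‖y' - y‖² ≤ β ‖y' - y‖²` and
`‖y - z‖² ≤ 2 ‖y' - y‖² + 2 ‖y' - z‖²`; the last one by the descent lemma
`H y' ≤ H y + ⟪∇H y, y' - y⟫ + β/2 ‖y' - y‖²`.
-/

open scoped RealInnerProductSpace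

open Set

section InnerProductSpace

variable {E : Type*} [NormedAddCommGroup E] [InnerProductSpace ℝ E]

theorem real_inner_le_mul_sq_add_sq_div {c : ℝ} (hc : 0 < c) (x y : E) :
    ⟪x, y⟫ ≤ c / 2 * ‖x‖ ^ 2 + 1 / (2 * c) * ‖y‖ ^ 2 := by
  have h := norm_sub_sq_real (c • x) y
  rw [norm_smul, real_inner_smul_left, Real.norm_of_nonneg hc.le] at h
  rw [div_mul_eq_mul_div, one_div_mul_eq_div, div_add_div _ _ two_ne_zero (by positivity),
    le_div_iff₀ (by positivity)]
  nlinarith [sq_nonneg ‖c • x - y‖]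

theorem norm_sub_sq_le (x y : E) : ‖x - y‖ ^ 2 ≤ 2 * ‖x‖ ^ 2 + 2 * ‖y‖ ^ 2 := by
  nlinarith [parallelogram_law_with_norm ℝ x y, sq_nonneg ‖x + y‖]

variable [CompleteSpace E]

theorem le_add_inner_add_sq_of_gradient_lipschitz {f : E → ℝ} {f' : E → E} {L : ℝ}
    (hf : ∀ u, HasGradientAt f (f' u) u) (hL : ∀ u v, ‖f' u - f' v‖ ≤ L * ‖u - v‖) (a b : E) :
    f b ≤ f a + ⟪f' a, b - a⟫ + L / 2 * ‖b - a‖ ^ 2 := by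
  set γ : ℝ → E := ⇑(AffineMap.lineMap (k := ℝ) a b)
  set d := b - a
  have hγ : ∀ t, γ t - a = t • d := AffineMap.lineMap_vsub_left a b
  -- The Lipschitz bound makes `ψ` antitone on `[0, 1]`; `ψ 1 ≤ ψ 0` is the claim.
  set ψ : ℝ → ℝ := fun t ↦ f (γ t) - t * ⟪f' a, d⟫ - L / 2 * ‖d‖ ^ 2 * t ^ 2
  have hψ : ∀ t, HasDerivAt ψ (⟪f' (γ t) - f' a, d⟫ - L * ‖d‖ ^ 2 * t) t := by
    intro t
    have hfγ : HasDerivAt (fun t ↦ f (γ t)) ⟪f' (γ t), d⟫ t :=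
      (hasGradientAt_iff_hasFDerivAt.mp (hf (γ t))).comp_hasDerivAt t
        AffineMap.hasDerivAt_lineMap
    refine ((hfγ.sub ((hasDerivAt_id t).mul_const ⟪f' a, d⟫)).sub
      ((hasDerivAt_pow 2 t).const_mul (L / 2 * ‖d‖ ^ 2))).congr_deriv ?_
    simp only [inner_sub_left, Nat.cast_ofNat, one_mul]
    ring
  have hψ'_nonpos : ∀ t ∈ Ioo (0 : ℝ) 1, ⟪f' (γ t) - f' a, d⟫ - L * ‖d‖ ^ 2 * t ≤ 0 := by
    intro t ht
    have hlip : ‖f' (γ t) - f' a‖ ≤ L * (t * ‖d‖) := by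
      simpa [hγ, norm_smul, abs_of_pos ht.1] using hL (γ t) a
    have := calc
      ⟪f' (γ t) - f' a, d⟫ ≤ ‖f' (γ t) - f' a‖ * ‖d‖ := real_inner_le_norm _ _
      _ ≤ L * (t * ‖d‖) * ‖d‖ := by gcongr
    linarith
  have hanti : AntitoneOn ψ (Icc 0 1) :=
    antitoneOn_of_hasDerivWithinAt_nonpos (convex_Icc 0 1)
      (fun t _ ↦ (hψ t).continuousAt.continuousWithinAt)
      (fun t _ ↦ (hψ t).hasDerivWithinAt) (by rwa [interior_Icc])
  have key := hanti (left_mem_Icc.2 zero_le_one) (right_mem_Icc.2 zero_le_one) zero_le_one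
  simp only [ψ, γ, AffineMap.lineMap_apply_zero, AffineMap.lineMap_apply_one] at key
  linarith

end InnerProductSpace

/-- The cross-term estimate (eq. 16 in Appendix A.1) used in the proof of Lemma A.3:
for `H` differentiable with `β`-Lipschitz gradient (`0 < β ≤ 1`) and arbitrary
gradient estimates `g, g'` of `∇H(y), ∇H(y')`. -/
theorem stmt_3 {n : ℕ}
    (H : EuclideanSpace ℝ (Fin n) → ℝ)
    (H' : EuclideanSpace ℝ (Fin n) → EuclideanSpace ℝ (Fin n))
    (β : ℝ) (hβ : 0 < β) (hβ1 : β ≤ 1)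
    (hdiff : ∀ u, HasGradientAt H (H' u) u)
    (hlip : ∀ u v, ‖H' u - H' v‖ ≤ β * ‖u - v‖)
    (y y' z g g' : EuclideanSpace ℝ (Fin n)) :
    ⟪g', z - y'⟫ - ⟪g, z - y⟫
      ≤ (1/2) * ‖g' - H' y'‖ ^ 2 + ‖g - H' y‖ ^ 2 + H y - H y'
        + ((2 * β + 1)/2) * ‖y' - y‖ ^ 2 + (3/2) * ‖y' - z‖ ^ 2 := by
  have hsplit : ⟪g', z - y'⟫ - ⟪g, z - y⟫ = ⟪g' - H' y', z - y'⟫ + ⟪g - H' y, y - z⟫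
      + ⟪H' y' - H' y, z - y'⟫ - ⟪H' y, y' - y⟫ := by
    simp only [inner_sub_left, inner_sub_right]
    ring
  have hy' := real_inner_le_mul_sq_add_sq_div one_pos (g' - H' y') (z - y')
  have hy := real_inner_le_mul_sq_add_sq_div two_pos (g - H' y) (y - z)
  have hgrad := real_inner_le_mul_sq_add_sq_div one_pos (H' y' - H' y) (z - y')
  have hdescent := le_add_inner_add_sq_of_gradient_lipschitz hdiff hlip y y'
  have hyz : ‖y - z‖ ^ 2 ≤ 2 * ‖y' - z‖ ^ 2 + 2 * ‖y' - y‖ ^ 2 := by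
    simpa using norm_sub_sq_le (y' - z) (y' - y)
  have hgrad_sq : ‖H' y' - H' y‖ ^ 2 ≤ β * ‖y' - y‖ ^ 2 := by
    calc ‖H' y' - H' y‖ ^ 2 ≤ (β * ‖y' - y‖) ^ 2 := by gcongr; exact hlip y' y
      _ = β * β * ‖y' - y‖ ^ 2 := by ring
      _ ≤ β * ‖y' - y‖ ^ 2 := by gcongr; exact mul_le_of_le_one_right hβ.le hβ1
  rw [norm_sub_rev z y'] at hy' hgrad
  linarith
end

section
/- Under the standing assumptions and the STOS double-step relations, the following one-step inequality holds: F(y⁺) + G(z⁺) + H(y⁺) + ‖y⁺ − x⁺‖²/(2γ) − ‖z⁺ − x⁺‖²/(2γ) + ⟨g⁺, z⁺ − y⁺⟩ ≤ F(y) + G(z) + H(y) + ‖y − x‖²/(2γ) − ‖z − x‖²/(2γ) + ⟨g, z − y⟩ + ((3γ + 2)/(2γ))‖y⁺ − z‖² + ½‖g⁺ − ∇H(y⁺)‖² + ‖g − ∇H(y)‖² + ((γ(1 + l + 2β) − 1)/(2γ))‖y⁺ − y‖². -/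
open scoped RealInnerProductSpace
open Set Filter Topology

/-!
The `F`-step minimizes `F + ‖· - x‖² / (2γ)`, which is `(1/γ - l)`-strongly convex, so comparing
its value at `y⁺` with the value at `y` gains `(1/γ - l)/2 · ‖y⁺ - y‖²`; the `G`-step is compared
with the value at `z`, and `H` is bounded by the descent lemma. Once `x⁺ = x + z⁺ - y⁺` is
substituted, the quadratic terms of the two `G`-objectives and of `x⁺` collapse by a polarization
identity, and what remains are the estimator errors `g⁺ - ∇H(y⁺)`, `g - ∇H(y)` paired with
`z - y⁺` and `z - y`, which Young's inequality and the Lipschitz bound on `∇H` absorb.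
-/

section

variable {E : Type*} [NormedAddCommGroup E]

theorem StrongConvexOn.add_sq_le_of_isMinOn [NormedSpace ℝ E] {s : Set E} {m : ℝ} {f : E → ℝ}
    {a v : E} (hf : StrongConvexOn s m f) (hmin : IsMinOn f s a) (ha : a ∈ s) (hv : v ∈ s) :
    f a + m / 2 * ‖a - v‖ ^ 2 ≤ f v := by
  have key : ∀ t ∈ Ioo (0 : ℝ) 1, f a + (1 - t) * (m / 2 * ‖a - v‖ ^ 2) ≤ f v := by
    rintro t ⟨ht0, ht1⟩
    have hconv := hf.2 ha hv (sub_nonneg.2 ht1.le) ht0.le (sub_add_cancel 1 t)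
    have hmem := hf.1 ha hv (sub_nonneg.2 ht1.le) ht0.le (sub_add_cancel 1 t)
    have hle := isMinOn_iff.1 hmin _ hmem
    simp only [smul_eq_mul] at hconv
    refine le_of_mul_le_mul_left ?_ ht0
    linarith
  have hlim : Tendsto (fun t : ℝ ↦ f a + (1 - t) * (m / 2 * ‖a - v‖ ^ 2)) (𝓝[>] 0)
      (𝓝 (f a + m / 2 * ‖a - v‖ ^ 2)) := by
    have hc : Continuous (fun t : ℝ ↦ f a + (1 - t) * (m / 2 * ‖a - v‖ ^ 2)) := by fun_prop
    simpa using (hc.tendsto 0).mono_left nhdsWithin_le_nhds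
  exact le_of_tendsto hlim (eventually_of_mem (Ioo_mem_nhdsGT zero_lt_one) key)

variable [InnerProductSpace ℝ E]

theorem strongConvexOn_add_norm_sub_sq_div {F : E → ℝ} {l : ℝ}
    (hF : ConvexOn ℝ univ (fun u ↦ F u + l / 2 * ‖u‖ ^ 2)) (γ : ℝ) (x : E) :
    StrongConvexOn univ (γ⁻¹ - l) (fun u ↦ F u + ‖u - x‖ ^ 2 / (2 * γ)) := by
  rw [strongConvexOn_iff_convex]
  have hlin := ((-γ⁻¹ • innerₛₗ ℝ x).convexOn convex_univ).add_const (‖x‖ ^ 2 / (2 * γ))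
  refine (hF.add hlin).congr fun u _ ↦ ?_
  simp only [norm_sub_sq_real, Pi.add_apply, LinearMap.smul_apply, innerₛₗ_apply_apply,
    smul_eq_mul, real_inner_comm x u]
  ring

theorem stos_double_step_identity (γ : ℝ) (x yp z zp gp : E) :
    ‖yp - (x + zp - yp)‖ ^ 2 - ‖zp - (x + zp - yp)‖ ^ 2
      + ‖z - ((2 : ℝ) • yp - γ • gp - x)‖ ^ 2 - ‖zp - ((2 : ℝ) • yp - γ • gp - x)‖ ^ 2
      + 2 * γ * ⟪gp, zp - yp⟫
    = ‖yp - x‖ ^ 2 - ‖z - x‖ ^ 2 + 2 * ‖z - yp‖ ^ 2 + 2 * γ * ⟪gp, z - yp⟫ := by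
  simp only [← real_inner_self_eq_norm_sq, inner_sub_left, inner_sub_right,
    inner_add_left, inner_add_right, real_inner_smul_left, real_inner_smul_right]
  linear_combination -γ * real_inner_comm z gp - γ * real_inner_comm gp zp

theorem estimator_error_le {β : ℝ} (hβ : 0 ≤ β) (hβ1 : β ≤ 1) (g gp u up y yp z : E)
    (hlip : ‖up - u‖ ≤ β * ‖yp - y‖) :
    ⟪gp, z - yp⟫ - ⟪g, z - y⟫ + ⟪u, yp - y⟫
      ≤ 3 / 2 * ‖z - yp‖ ^ 2 + 1 / 2 * ‖gp - up‖ ^ 2 + ‖g - u‖ ^ 2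
        + (1 + β) / 2 * ‖yp - y‖ ^ 2 := by
  have hsplit : ⟪gp, z - yp⟫ - ⟪g, z - y⟫ + ⟪u, yp - y⟫
      = ⟪gp - up, z - yp⟫ + ⟪up - u, z - yp⟫ + ⟪u - g, z - y⟫ := by
    simp only [inner_sub_left, inner_sub_right]
    ring
  have h1 : ⟪gp - up, z - yp⟫ ≤ 1 / 2 * ‖gp - up‖ ^ 2 + 1 / 2 * ‖z - yp‖ ^ 2 := by
    linarith [norm_sub_sq_real (gp - up) (z - yp), sq_nonneg ‖gp - up - (z - yp)‖]
  have h2 : ⟪up - u, z - yp⟫ ≤ β / 2 * ‖yp - y‖ ^ 2 + 1 / 2 * ‖z - yp‖ ^ 2 := by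
    have hcs := real_inner_le_norm (up - u) (z - yp)
    nlinarith [mul_le_mul_of_nonneg_right hlip (norm_nonneg (z - yp)),
      mul_nonneg hβ (sq_nonneg (‖yp - y‖ - ‖z - yp‖)),
      mul_nonneg (sub_nonneg.2 hβ1) (sq_nonneg ‖z - yp‖)]
  have h3 : ⟪u - g, z - y⟫ ≤ ‖g - u‖ ^ 2 + 1 / 4 * ‖z - y‖ ^ 2 := by
    have hcs := real_inner_le_norm (u - g) (z - y)
    rw [norm_sub_rev u g] at hcs
    nlinarith [sq_nonneg (‖g - u‖ - 1 / 2 * ‖z - y‖)]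
  have hpar : ‖z - y‖ ^ 2 ≤ 2 * ‖z - yp‖ ^ 2 + 2 * ‖yp - y‖ ^ 2 := by
    have := parallelogram_law_with_norm ℝ (z - yp) (yp - y)
    rw [sub_add_sub_cancel] at this
    linarith [sq_nonneg ‖z - yp - (yp - y)‖]
  linarith

variable [CompleteSpace E]

theorem HasGradientAt.hasDerivAt_comp_add_smul {H : E → ℝ} {g a d : E} {t : ℝ}
    (h : HasGradientAt H g (a + t • d)) :
    HasDerivAt (fun s : ℝ ↦ H (a + s • d)) ⟪g, d⟫ t := by
  have hline : HasDerivAt (fun s : ℝ ↦ a + s • d) d t := by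
    simpa using ((hasDerivAt_id t).smul_const d).const_add a
  simpa [Function.comp_def] using h.hasFDerivAt.comp_hasDerivAt t hline

theorem le_add_inner_add_sq_of_lipschitz_gradient {H : E → ℝ} {H' : E → E} {β : ℝ}
    (hH : ∀ u, HasGradientAt H (H' u) u) (hH' : ∀ u v, ‖H' u - H' v‖ ≤ β * ‖u - v‖) (a b : E) :
    H b ≤ H a + ⟪H' a, b - a⟫ + β / 2 * ‖b - a‖ ^ 2 := by
  set d := b - a
  set δ : ℝ → ℝ := fun t ↦ H a + t * ⟪H' a, d⟫ + β / 2 * ‖d‖ ^ 2 * t ^ 2 - H (a + t • d)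
  have hδ : ∀ t, HasDerivAt δ (⟪H' a, d⟫ + β * ‖d‖ ^ 2 * t - ⟪H' (a + t • d), d⟫) t := by
    intro t
    have h := ((((hasDerivAt_id t).mul_const ⟪H' a, d⟫).const_add (H a)).add
      ((hasDerivAt_pow 2 t).const_mul (β / 2 * ‖d‖ ^ 2))).sub
      (hH (a + t • d)).hasDerivAt_comp_add_smul
    exact h.congr_deriv (by ring)
  have hmono : MonotoneOn δ (Icc 0 1) := by
    refine monotoneOn_of_hasDerivWithinAt_nonneg (convex_Icc 0 1)
      (fun t _ ↦ (hδ t).continuousAt.continuousWithinAt) (fun t _ ↦ (hδ t).hasDerivWithinAt) ?_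
    rw [interior_Icc]
    rintro t ⟨ht0, -⟩
    have hlip : ‖H' (a + t • d) - H' a‖ ≤ β * (t * ‖d‖) := by
      simpa [norm_smul, abs_of_pos ht0] using hH' (a + t • d) a
    have hcs := real_inner_le_norm (H' (a + t • d) - H' a) d
    rw [inner_sub_left] at hcs
    nlinarith [mul_le_mul_of_nonneg_right hlip (norm_nonneg d)]
  have h01 : δ 0 ≤ δ 1 :=
    hmono (left_mem_Icc.2 zero_le_one) (right_mem_Icc.2 zero_le_one) zero_le_one
  simp only [δ, d, zero_smul, one_smul, add_zero, add_sub_cancel] at h01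
  linarith

end

theorem stmt_4_general {n : ℕ}
    (F G H : EuclideanSpace ℝ (Fin n) → ℝ)
    (H' : EuclideanSpace ℝ (Fin n) → EuclideanSpace ℝ (Fin n))
    (γ l β : ℝ) (hγ : 0 < γ) (hβ : 0 < β) (hβ1 : β ≤ 1)
    (hFconv : ConvexOn ℝ Set.univ (fun u => F u + (l/2) * ‖u‖ ^ 2))
    (hHdiff : ∀ u, HasGradientAt H (H' u) u)
    (hHlip : ∀ u v, ‖H' u - H' v‖ ≤ β * ‖u - v‖)
    (x xp y yp z zp g gp : EuclideanSpace ℝ (Fin n))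
    (hyp : ∀ u, F yp + ‖yp - x‖ ^ 2 / (2*γ) ≤ F u + ‖u - x‖ ^ 2 / (2*γ))
    (hzp : ∀ u, G zp + ‖zp - ((2:ℝ) • yp - γ • gp - x)‖ ^ 2 / (2*γ)
        ≤ G u + ‖u - ((2:ℝ) • yp - γ • gp - x)‖ ^ 2 / (2*γ))
    (hxp : xp = x + zp - yp) :
    F yp + G zp + H yp + ‖yp - xp‖ ^ 2 / (2*γ) - ‖zp - xp‖ ^ 2 / (2*γ) + ⟪gp, zp - yp⟫
      ≤ F y + G z + H y + ‖y - x‖ ^ 2 / (2*γ) - ‖z - x‖ ^ 2 / (2*γ) + ⟪g, z - y⟫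
        + ((3*γ + 2)/(2*γ)) * ‖yp - z‖ ^ 2
        + (1/2) * ‖gp - H' yp‖ ^ 2 + ‖g - H' y‖ ^ 2
        + ((γ * (1 + l + 2*β) - 1)/(2*γ)) * ‖yp - y‖ ^ 2 := by
  subst hxp
  have hF := (strongConvexOn_add_norm_sub_sq_div hFconv γ x).add_sq_le_of_isMinOn
    (fun u _ ↦ hyp u) (mem_univ yp) (mem_univ y)
  have hG := hzp z
  have hH := le_add_inner_add_sq_of_lipschitz_gradient hHdiff hHlip y yp
  have hE := estimator_error_le hβ.le hβ1 g gp (H' y) (H' yp) y yp z (hHlip yp y)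
  have hI := stos_double_step_identity γ x yp z zp gp
  rw [norm_sub_rev yp z]
  -- the residual vanishes only once the denominators `2γ` are cleared
  linear_combination (norm := skip) hF + hG + hH + hE + hI / (2 * γ)
  exact le_of_eq (by field_simp; ring)

/-- Lemma A.3 of the paper, stated pathwise with explicit estimator vectors `g, g⁺`:
one-step inequality for the STOS double step. -/
theorem stmt_4 {n : ℕ}
    (F G H : EuclideanSpace ℝ (Fin n) → ℝ)
    (F' H' : EuclideanSpace ℝ (Fin n) → EuclideanSpace ℝ (Fin n))
    (γ L l β : ℝ) (hγ : 0 < γ) (hL : 0 < L) (hβ : 0 < β) (hβ1 : β ≤ 1)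
    (hFdiff : ∀ u, HasGradientAt F (F' u) u)
    (hFlip : ∀ u v, ‖F' u - F' v‖ ≤ L * ‖u - v‖)
    (hFconv : ConvexOn ℝ Set.univ (fun u => F u + (l/2) * ‖u‖ ^ 2))
    (hG : LowerSemicontinuous G)
    (hHdiff : ∀ u, HasGradientAt H (H' u) u)
    (hHlip : ∀ u v, ‖H' u - H' v‖ ≤ β * ‖u - v‖)
    (w x xp y yp z zp g gp : EuclideanSpace ℝ (Fin n))
    (hy : ∀ u, F y + ‖y - w‖ ^ 2 / (2*γ) ≤ F u + ‖u - w‖ ^ 2 / (2*γ))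
    (hz : ∀ u, G z + ‖z - ((2:ℝ) • y - γ • g - w)‖ ^ 2 / (2*γ)
        ≤ G u + ‖u - ((2:ℝ) • y - γ • g - w)‖ ^ 2 / (2*γ))
    (hx : x = w + z - y)
    (hyp : ∀ u, F yp + ‖yp - x‖ ^ 2 / (2*γ) ≤ F u + ‖u - x‖ ^ 2 / (2*γ))
    (hzp : ∀ u, G zp + ‖zp - ((2:ℝ) • yp - γ • gp - x)‖ ^ 2 / (2*γ)
        ≤ G u + ‖u - ((2:ℝ) • yp - γ • gp - x)‖ ^ 2 / (2*γ))
    (hxp : xp = x + zp - yp) :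
    F yp + G zp + H yp + ‖yp - xp‖ ^ 2 / (2*γ) - ‖zp - xp‖ ^ 2 / (2*γ) + ⟪gp, zp - yp⟫
      ≤ F y + G z + H y + ‖y - x‖ ^ 2 / (2*γ) - ‖z - x‖ ^ 2 / (2*γ) + ⟪g, z - y⟫
        + ((3*γ + 2)/(2*γ)) * ‖yp - z‖ ^ 2
        + (1/2) * ‖gp - H' yp‖ ^ 2 + ‖g - H' y‖ ^ 2
        + ((γ * (1 + l + 2*β) - 1)/(2*γ)) * ‖yp - y‖ ^ 2 :=
  stmt_4_general F G H H' γ l β hγ hβ hβ1 hFconv hHdiff hHlip x xp y yp z zp g gp hyp hzp hxp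
end

section
/- Under the standing assumptions and the STOS double-step relations, for every y⁻ ∈ ℝⁿ and every constant C₁ > 0: Φ(x⁺, y⁺, z⁺, y) ≤ Φ(x, y, z, y⁻) + ‖z − y‖² + ‖g⁺ − ∇H(y⁺)‖² + (3/2)‖g − ∇H(y)‖² + ((3γ + 2)/(2γ))‖y⁺ − z‖² + ((γ(1 + l + 2β) − 1)/(2γ) + C₁)‖y⁺ − y‖² − C₁‖y − y⁻‖². -/
/-!
Weak convexity of `F` and optimality of `y⁺` give
`F y⁺ ≤ F y + (l/2)‖y⁺ - y‖² + ⟪y⁺ - x, y - y⁺⟫/γ`, optimality of `z⁺` tested at `z` bounds `G z⁺`,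
and the descent lemma bounds `H y⁺`. Adding these, every term involving `x` cancels because
`x⁺ = x + z⁺ - y⁺`, and what is left besides squared norms is
`⟪z - z⁺, g⁺ - ∇H y⁺⟫ + ⟪∇H y⁺ - ∇H y, z - y⁺⟫`, which Young's inequality and the
`β`-Lipschitz bound (with `β² ≤ β`) absorb into the quadratic terms on the right.
-/

open scoped RealInnerProductSpace

/-- The merit function `M(x,y,z)` of the paper. -/
noncomputable def merit {n : ℕ}
    (F G H : EuclideanSpace ℝ (Fin n) → ℝ)
    (H' : EuclideanSpace ℝ (Fin n) → EuclideanSpace ℝ (Fin n))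
    (γ : ℝ) (x y z : EuclideanSpace ℝ (Fin n)) : ℝ :=
  F y + G z + H y + ‖y - x‖ ^ 2 / (2*γ) - ‖z - x‖ ^ 2 / (2*γ) + ⟪H' y, z - y⟫

/-- The auxiliary function `Φ(x,y,z,y′) = M(x,y,z) − ½‖z − y‖² + C₁‖y − y′‖²`. -/
noncomputable def phiFun {n : ℕ}
    (F G H : EuclideanSpace ℝ (Fin n) → ℝ)
    (H' : EuclideanSpace ℝ (Fin n) → EuclideanSpace ℝ (Fin n))
    (γ C₁ : ℝ) (x y z y' : EuclideanSpace ℝ (Fin n)) : ℝ :=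
  merit F G H H' γ x y z - (1/2) * ‖z - y‖ ^ 2 + C₁ * ‖y - y'‖ ^ 2

open Set Filter Topology

section InnerProductSpace

variable {E : Type*} [NormedAddCommGroup E] [InnerProductSpace ℝ E]

def IsProxPoint (F : E → ℝ) (γ : ℝ) (p v : E) : Prop :=
  ∀ u, F v + ‖v - p‖ ^ 2 / (2 * γ) ≤ F u + ‖u - p‖ ^ 2 / (2 * γ)

theorem nonneg_of_forall_add_mul_nonneg {A B : ℝ} (h : ∀ t ∈ Ioc (0 : ℝ) 1, 0 ≤ A + t * B) :
    0 ≤ A := by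
  have hlim : Tendsto (fun t : ℝ => A + t * B) (𝓝[>] 0) (𝓝 A) := by
    have : Continuous fun t : ℝ => A + t * B := by fun_prop
    simpa using this.continuousWithinAt.tendsto (s := Ioi 0) (x := 0)
  exact ge_of_tendsto hlim (mem_of_superset (Ioc_mem_nhdsGT one_pos) h)

theorem norm_add_smul_sub_sq (v u : E) (t : ℝ) :
    ‖v + t • (u - v)‖ ^ 2 = (1 - t) * ‖v‖ ^ 2 + t * ‖u‖ ^ 2 - t * (1 - t) * ‖u - v‖ ^ 2 := by
  simp only [← real_inner_self_eq_norm_sq, inner_sub_left, inner_sub_right, inner_add_left,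
    inner_add_right, real_inner_smul_right, real_inner_comm]
  ring

theorem apply_add_smul_sub_le_of_convexOn_add_sq {F : E → ℝ} {l : ℝ}
    (hF : ConvexOn ℝ univ fun u => F u + l / 2 * ‖u‖ ^ 2) (v u : E) {t : ℝ}
    (ht₀ : 0 ≤ t) (ht₁ : t ≤ 1) :
    F (v + t • (u - v)) ≤ (1 - t) * F v + t * F u + l / 2 * (t * (1 - t)) * ‖u - v‖ ^ 2 := by
  have h := hF.2 (mem_univ v) (mem_univ u) (sub_nonneg.2 ht₁) ht₀ (sub_add_cancel 1 t)
  rw [show (1 - t) • v + t • u = v + t • (u - v) by module] at h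
  simp only [smul_eq_mul, norm_add_smul_sub_sq] at h
  linear_combination h

theorem IsProxPoint.apply_le_of_convexOn_add_sq {F : E → ℝ} {l γ : ℝ} {p v : E}
    (hv : IsProxPoint F γ p v) (hF : ConvexOn ℝ univ fun u => F u + l / 2 * ‖u‖ ^ 2) (u : E) :
    F v ≤ F u + l / 2 * ‖u - v‖ ^ 2 + ⟪v - p, u - v⟫ / γ := by
  suffices 0 ≤ F u - F v + l / 2 * ‖u - v‖ ^ 2 + ⟪v - p, u - v⟫ / γ by linarith
  -- test minimality at `v + t • (u - v)`, divide by `t` and let `t → 0`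
  refine nonneg_of_forall_add_mul_nonneg (B := (1 / (2 * γ) - l / 2) * ‖u - v‖ ^ 2) fun t ht => ?_
  have hconv := apply_add_smul_sub_le_of_convexOn_add_sq hF v u ht.1.le ht.2
  have hmin := hv (v + t • (u - v))
  have hexpand : ‖v + t • (u - v) - p‖ ^ 2
      = ‖v - p‖ ^ 2 + 2 * t * ⟪v - p, u - v⟫ + t ^ 2 * ‖u - v‖ ^ 2 := by
    rw [show v + t • (u - v) - p = (v - p) + t • (u - v) by abel, norm_add_sq_real,
      real_inner_smul_right, norm_smul, Real.norm_eq_abs, mul_pow, sq_abs]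
    ring
  rw [hexpand] at hmin
  have hsegment : 0 ≤ t * ((F u - F v + l / 2 * ‖u - v‖ ^ 2 + ⟪v - p, u - v⟫ / γ)
      + t * ((1 / (2 * γ) - l / 2) * ‖u - v‖ ^ 2)) := by
    linear_combination hconv + hmin
  exact (mul_nonneg_iff_of_pos_left ht.1).1 hsegment

theorem apply_le_add_inner_add_sq_of_gradient_lipschitz [CompleteSpace E] {H : E → ℝ}
    {H' : E → E} {β : ℝ} (hH : ∀ u, HasGradientAt H (H' u) u)
    (hH' : ∀ u v, ‖H' u - H' v‖ ≤ β * ‖u - v‖) (y Y : E) :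
    H Y ≤ H y + ⟪H' y, Y - y⟫ + β / 2 * ‖Y - y‖ ^ 2 := by
  set d := Y - y
  have hderiv : ∀ t : ℝ, HasDerivAt (fun t : ℝ => H (y + t • d)) ⟪H' (y + t • d), d⟫ t := by
    intro t
    have hline : HasDerivAt (fun t : ℝ => y + t • d) d t := by
      simpa using ((hasDerivAt_id t).smul_const d).const_add y
    have h := (hH (y + t • d)).hasFDerivAt.comp_hasDerivAt t hline
    simp only [InnerProductSpace.toDual_apply_apply] at h
    exact h
  have hbound : ∀ t : ℝ, HasDerivAt (fun t : ℝ => H y + t * ⟪H' y, d⟫ + β / 2 * ‖d‖ ^ 2 * t ^ 2)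
      (⟪H' y, d⟫ + β * ‖d‖ ^ 2 * t) t := by
    intro t
    refine ((((hasDerivAt_id t).mul_const ⟪H' y, d⟫).const_add (H y)).add
      ((hasDerivAt_pow 2 t).const_mul (β / 2 * ‖d‖ ^ 2))).congr_deriv ?_
    simp only [Nat.cast_ofNat]
    ring
  have hslope : ∀ t ∈ Ico (0 : ℝ) 1, ⟪H' (y + t • d), d⟫ ≤ ⟪H' y, d⟫ + β * ‖d‖ ^ 2 * t := by
    intro t ht
    have hlip : ‖H' (y + t • d) - H' y‖ ≤ β * t * ‖d‖ := by
      simpa [norm_smul, abs_of_nonneg ht.1, mul_assoc] using hH' (y + t • d) y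
    have := real_inner_le_norm (H' (y + t • d) - H' y) d
    rw [inner_sub_left] at this
    nlinarith [norm_nonneg d]
  have := image_le_of_deriv_right_le_deriv_boundary
    (fun t _ => (hderiv t).continuousAt.continuousWithinAt)
    (fun t _ => (hderiv t).hasDerivWithinAt) (by simp)
    (fun t _ => (hbound t).continuousAt.continuousWithinAt)
    (fun t _ => (hbound t).hasDerivWithinAt) hslope (right_mem_Icc.2 zero_le_one)
  simpa [d] using this

theorem inner_sub_add_inner_le (a b d e : E) :
    ⟪a - b, d⟫ + ⟪e, a⟫ ≤ ‖d‖ ^ 2 + ‖a‖ ^ 2 + ‖b‖ ^ 2 / 2 + ‖e‖ ^ 2 / 2 := by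
  have h₁ := real_inner_self_nonneg (x := d - (2⁻¹ : ℝ) • (a - b))
  have h₂ := real_inner_self_nonneg (x := e - a)
  have h₃ := real_inner_self_nonneg (x := a + b)
  simp only [← real_inner_self_eq_norm_sq, inner_sub_left, inner_sub_right, inner_add_left,
    inner_add_right, real_inner_smul_right, real_inner_comm] at *
  linarith

end InnerProductSpace

theorem merit_stos_step_le {n : ℕ} {F G H : EuclideanSpace ℝ (Fin n) → ℝ}
    {H' : EuclideanSpace ℝ (Fin n) → EuclideanSpace ℝ (Fin n)} {γ l β : ℝ} (hγ : γ ≠ 0)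
    (hF : ConvexOn ℝ univ fun u => F u + (l / 2) * ‖u‖ ^ 2)
    (hH : ∀ u, HasGradientAt H (H' u) u) (hH' : ∀ u v, ‖H' u - H' v‖ ≤ β * ‖u - v‖)
    {x y z Y Z g : EuclideanSpace ℝ (Fin n)}
    (hY : IsProxPoint F γ x Y) (hZ : IsProxPoint G γ ((2 : ℝ) • Y - γ • g - x) Z) :
    merit F G H H' γ (x + Z - Y) Y Z
      ≤ merit F G H H' γ x y z + (l + β) / 2 * ‖Y - y‖ ^ 2 + ‖Y - z‖ ^ 2 / γ
        - ‖Y - y‖ ^ 2 / (2 * γ) + ⟪z - Z, g - H' Y⟫ + ⟪H' Y - H' y, z - Y⟫ := by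
  have hFY := hY.apply_le_of_convexOn_add_sq hF y
  have hGZ := hZ z
  have hHY := apply_le_add_inner_add_sq_of_gradient_lipschitz hH hH' y Y
  have hnorms : ⟪Y - x, y - Y⟫ / γ
      + (‖z - ((2 : ℝ) • Y - γ • g - x)‖ ^ 2 - ‖Z - ((2 : ℝ) • Y - γ • g - x)‖ ^ 2) / (2 * γ)
      + (‖Y - (x + Z - Y)‖ ^ 2 - ‖Z - (x + Z - Y)‖ ^ 2) / (2 * γ)
      = (‖y - x‖ ^ 2 - ‖z - x‖ ^ 2) / (2 * γ) + ‖Y - z‖ ^ 2 / γ - ‖Y - y‖ ^ 2 / (2 * γ)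
        + ⟪z - Z, g⟫ := by
    field_simp
    simp only [← real_inner_self_eq_norm_sq, inner_sub_left, inner_sub_right, inner_add_left,
      inner_add_right, real_inner_smul_right, real_inner_comm]
    ring
  have hinner : ⟪H' Y, Z - Y⟫ + ⟪H' y, Y - y⟫ + ⟪z - Z, g⟫
      = ⟪H' y, z - y⟫ + ⟪z - Z, g - H' Y⟫ + ⟪H' Y - H' y, z - Y⟫ := by
    simp only [inner_sub_left, inner_sub_right, real_inner_comm]
    ring
  rw [norm_sub_rev y Y] at hFY
  simp only [merit]
  linear_combination hFY + hGZ + hHY + hnorms + hinner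

theorem stmt_5_general {n : ℕ}
    (F G H : EuclideanSpace ℝ (Fin n) → ℝ)
    (H' : EuclideanSpace ℝ (Fin n) → EuclideanSpace ℝ (Fin n))
    (γ l β : ℝ) (hγ : 0 < γ) (hβ : 0 < β) (hβ1 : β ≤ 1)
    (hFconv : ConvexOn ℝ Set.univ (fun u => F u + (l/2) * ‖u‖ ^ 2))
    (hHdiff : ∀ u, HasGradientAt H (H' u) u)
    (hHlip : ∀ u v, ‖H' u - H' v‖ ≤ β * ‖u - v‖)
    (x xp y yp z zp g gp : EuclideanSpace ℝ (Fin n))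
    (hyp : ∀ u, F yp + ‖yp - x‖ ^ 2 / (2*γ) ≤ F u + ‖u - x‖ ^ 2 / (2*γ))
    (hzp : ∀ u, G zp + ‖zp - ((2:ℝ) • yp - γ • gp - x)‖ ^ 2 / (2*γ)
        ≤ G u + ‖u - ((2:ℝ) • yp - γ • gp - x)‖ ^ 2 / (2*γ))
    (hxp : xp = x + zp - yp)
    (ym : EuclideanSpace ℝ (Fin n)) (C₁ : ℝ) :
    phiFun F G H H' γ C₁ xp yp zp y
      ≤ phiFun F G H H' γ C₁ x y z ym
        + ‖z - y‖ ^ 2 + ‖gp - H' yp‖ ^ 2 + (3/2) * ‖g - H' y‖ ^ 2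
        + ((3*γ + 2)/(2*γ)) * ‖yp - z‖ ^ 2
        + ((γ * (1 + l + 2*β) - 1)/(2*γ) + C₁) * ‖yp - y‖ ^ 2
        - C₁ * ‖y - ym‖ ^ 2 := by
  subst hxp
  have hstep := merit_stos_step_le (y := y) (z := z) hγ.ne' hFconv hHdiff hHlip hyp hzp
  have hyoung := inner_sub_add_inner_le (z - yp) (zp - yp) (gp - H' yp) (H' yp - H' y)
  rw [sub_sub_sub_cancel_right, norm_sub_rev z yp] at hyoung
  have hgrad : ‖H' yp - H' y‖ ^ 2 ≤ β * ‖yp - y‖ ^ 2 :=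
    calc ‖H' yp - H' y‖ ^ 2 ≤ (β * ‖yp - y‖) ^ 2 := by gcongr; exact hHlip yp y
      _ = β ^ 2 * ‖yp - y‖ ^ 2 := by ring
      _ ≤ β * ‖yp - y‖ ^ 2 := by gcongr; nlinarith
  have hc₁ : (3 * γ + 2) / (2 * γ) * ‖yp - z‖ ^ 2 = 3 / 2 * ‖yp - z‖ ^ 2 + ‖yp - z‖ ^ 2 / γ := by
    field_simp
  have hc₂ : (γ * (1 + l + 2 * β) - 1) / (2 * γ) * ‖yp - y‖ ^ 2
      = (1 + l + 2 * β) / 2 * ‖yp - y‖ ^ 2 - ‖yp - y‖ ^ 2 / (2 * γ) := by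
    field_simp
  unfold phiFun
  linear_combination hstep + hyoung + hgrad / 2 + sq_nonneg ‖z - y‖ / 2
    + 3 / 2 * sq_nonneg ‖g - H' y‖ + sq_nonneg ‖yp - z‖ / 2 + sq_nonneg ‖yp - y‖ / 2 - hc₁ - hc₂

/-- The pathwise descent inequality (eq. 24) underlying Theorem 3.2 of the paper. -/
theorem stmt_5 {n : ℕ}
    (F G H : EuclideanSpace ℝ (Fin n) → ℝ)
    (F' H' : EuclideanSpace ℝ (Fin n) → EuclideanSpace ℝ (Fin n))
    (γ L l β : ℝ) (hγ : 0 < γ) (hL : 0 < L) (hβ : 0 < β) (hβ1 : β ≤ 1)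
    (hFdiff : ∀ u, HasGradientAt F (F' u) u)
    (hFlip : ∀ u v, ‖F' u - F' v‖ ≤ L * ‖u - v‖)
    (hFconv : ConvexOn ℝ Set.univ (fun u => F u + (l/2) * ‖u‖ ^ 2))
    (hG : LowerSemicontinuous G)
    (hHdiff : ∀ u, HasGradientAt H (H' u) u)
    (hHlip : ∀ u v, ‖H' u - H' v‖ ≤ β * ‖u - v‖)
    (w x xp y yp z zp g gp : EuclideanSpace ℝ (Fin n))
    (hy : ∀ u, F y + ‖y - w‖ ^ 2 / (2*γ) ≤ F u + ‖u - w‖ ^ 2 / (2*γ))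
    (hz : ∀ u, G z + ‖z - ((2:ℝ) • y - γ • g - w)‖ ^ 2 / (2*γ)
        ≤ G u + ‖u - ((2:ℝ) • y - γ • g - w)‖ ^ 2 / (2*γ))
    (hx : x = w + z - y)
    (hyp : ∀ u, F yp + ‖yp - x‖ ^ 2 / (2*γ) ≤ F u + ‖u - x‖ ^ 2 / (2*γ))
    (hzp : ∀ u, G zp + ‖zp - ((2:ℝ) • yp - γ • gp - x)‖ ^ 2 / (2*γ)
        ≤ G u + ‖u - ((2:ℝ) • yp - γ • gp - x)‖ ^ 2 / (2*γ))
    (hxp : xp = x + zp - yp)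
    (ym : EuclideanSpace ℝ (Fin n)) (C₁ : ℝ) (hC₁ : 0 < C₁) :
    phiFun F G H H' γ C₁ xp yp zp y
      ≤ phiFun F G H H' γ C₁ x y z ym
        + ‖z - y‖ ^ 2 + ‖gp - H' yp‖ ^ 2 + (3/2) * ‖g - H' y‖ ^ 2
        + ((3*γ + 2)/(2*γ)) * ‖yp - z‖ ^ 2
        + ((γ * (1 + l + 2*β) - 1)/(2*γ) + C₁) * ‖yp - y‖ ^ 2
        - C₁ * ‖y - ym‖ ^ 2 :=
  stmt_5_general F G H H' γ l β hγ hβ hβ1 hFconv hHdiff hHlip x xp y yp z zp g gp hyp hzp hxp ym C₁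
end

section
/- Under the standing assumptions and the STOS double-step relations, with Λ(γ) := (1 − γ(1 + l + 2β))/(2γ) − (3γ + 2)(γL² + 2l + 2L)/2, the merit function decreases up to estimator-error terms: M(x⁺, y⁺, z⁺) + Λ(γ)‖y⁺ − y‖² ≤ M(x, y, z) + ⟨g − ∇H(y), z − y⟩ − ⟨g⁺ − ∇H(y⁺), z⁺ − y⁺⟩ + ½‖g⁺ − ∇H(y⁺)‖² + ‖g − ∇H(y)‖². -/
/-!
The two `F`-steps are stationarity conditions, `w = y + γ ∇F(y)` and `x = y⁺ + γ ∇F(y⁺)`, so with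
`d = y⁺ - y` and `δ = ∇F(y⁺) - ∇F(y)` the relation `x = w + z - y` gives `z = y⁺ + γ δ`.
Testing the minimality of `z⁺` against `z`, after completing the square in the estimator `g⁺`,
bounds `M(x⁺, y⁺, z⁺) + ⟨g⁺ - ∇H(y⁺), z⁺ - y⁺⟩` by `M(x, y, z)` plus a remainder made of the
gradient inequality of the weakly convex `F`, the descent lemma for `H`, `-‖d‖²/(2γ)` and cross
terms in `δ`. Young's inequality and the Lipschitz bounds `‖δ‖ ≤ L‖d‖`, `‖∇H(y⁺) - ∇H(y)‖ ≤ β‖d‖`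
turn everything into multiples of `‖d‖²`, and `Λ(γ)` is chosen so that these add up.
-/

open scoped RealInnerProductSpace

/-- The constant `Λ(γ)` of Theorem 3.1. -/
noncomputable def lambda0 (γ L l β : ℝ) : ℝ :=
  (1 - γ * (1 + l + 2*β)) / (2*γ) - (3*γ + 2) * (γ * L ^ 2 + 2*l + 2*L) / 2

open InnerProductSpace Set

section Calculus

variable {E : Type*} [NormedAddCommGroup E] [InnerProductSpace ℝ E]

theorem hasDerivAt_add_smul (u d : E) (t : ℝ) : HasDerivAt (fun s : ℝ => u + s • d) d t := by
  simpa using ((hasDerivAt_id t).smul_const d).const_add u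

theorem HasGradientAt.hasDerivAt_add_smul [CompleteSpace E] {f : E → ℝ} {f' u d : E} {t : ℝ}
    (hf : HasGradientAt f f' (u + t • d)) :
    HasDerivAt (fun s : ℝ => f (u + s • d)) ⟪f', d⟫ t := by
  simpa [toDual_apply_apply, Function.comp_def] using
    hf.hasFDerivAt.comp_hasDerivAt t (_root_.hasDerivAt_add_smul u d t)

theorem ConvexOn.add_le_of_hasDerivAt_add_smul {φ : E → ℝ} (hφ : ConvexOn ℝ univ φ) {u d : E}
    {D : ℝ} (h : HasDerivAt (fun t : ℝ => φ (u + t • d)) D 0) : φ u + D ≤ φ (u + d) := by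
  have hline : ConvexOn ℝ univ fun t : ℝ => φ (u + t • d) := by
    simpa [Function.comp_def, AffineMap.lineMap_apply, add_comm] using
      hφ.comp_affineMap (AffineMap.lineMap u (u + d))
  have hslope := hline.le_slope_of_hasDerivAt (mem_univ 0) (mem_univ 1) zero_lt_one h
  simp only [slope_def_field, one_smul, zero_smul, add_zero, sub_zero, div_one] at hslope
  linarith

theorem add_inner_sub_le_of_convexOn_add_norm_sq [CompleteSpace E] {f : E → ℝ} {f' u : E} {l : ℝ}
    (hconv : ConvexOn ℝ univ fun u => f u + l / 2 * ‖u‖ ^ 2) (hf : HasGradientAt f f' u)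
    (v : E) : f u + ⟪f', v - u⟫ - l / 2 * ‖v - u‖ ^ 2 ≤ f v := by
  have hline : HasDerivAt (fun t : ℝ => f (u + t • (v - u)) + l / 2 * ‖u + t • (v - u)‖ ^ 2)
      (⟪f', v - u⟫ + l / 2 * (2 * ⟪u, v - u⟫)) 0 := by
    refine (HasGradientAt.hasDerivAt_add_smul ?_).add (HasDerivAt.const_mul _ ?_)
    · simpa using hf
    · simpa using (hasDerivAt_add_smul u (v - u) 0).norm_sq
  have hle := hconv.add_le_of_hasDerivAt_add_smul hline
  rw [add_sub_cancel, ← sub_add_cancel v u, norm_add_sq_real] at hle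
  simp only [sub_add_cancel] at hle
  rw [real_inner_comm (v - u) u] at hle
  linear_combination hle

theorem neg_mul_norm_sq_le_inner_sub_of_convexOn_add_norm_sq [CompleteSpace E] {f : E → ℝ}
    {f' : E → E} {l : ℝ} (hconv : ConvexOn ℝ univ fun u => f u + l / 2 * ‖u‖ ^ 2)
    (hf : ∀ u, HasGradientAt f (f' u) u) (u v : E) :
    -(l * ‖v - u‖ ^ 2) ≤ ⟪f' v - f' u, v - u⟫ := by
  have huv := add_inner_sub_le_of_convexOn_add_norm_sq hconv (hf u) v
  have hvu := add_inner_sub_le_of_convexOn_add_norm_sq hconv (hf v) u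
  rw [← neg_sub v u, inner_neg_right, norm_neg] at hvu
  rw [inner_sub_left]
  linarith

theorem le_add_inner_sub_add_of_lipschitz [CompleteSpace E] {f : E → ℝ} {f' : E → E} {β : ℝ}
    (hf : ∀ u, HasGradientAt f (f' u) u) (hlip : ∀ u v, ‖f' u - f' v‖ ≤ β * ‖u - v‖)
    (u v : E) : f v ≤ f u + ⟪f' u, v - u⟫ + β / 2 * ‖v - u‖ ^ 2 := by
  set d := v - u
  set g : ℝ → ℝ := fun t => f (u + t • d) - t * ⟪f' u, d⟫ - β / 2 * t ^ 2 * ‖d‖ ^ 2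
  have hg : ∀ t, HasDerivAt g (⟪f' (u + t • d), d⟫ - ⟪f' u, d⟫ - β * t * ‖d‖ ^ 2) t := by
    intro t
    have hline : HasDerivAt (fun s : ℝ => f (u + s • d)) ⟪f' (u + t • d), d⟫ t :=
      (hf _).hasDerivAt_add_smul
    have hlin : HasDerivAt (fun s : ℝ => s * ⟪f' u, d⟫) ⟪f' u, d⟫ t := by
      simpa using (hasDerivAt_id t).mul_const ⟪f' u, d⟫
    have hsq : HasDerivAt (fun s : ℝ => β / 2 * s ^ 2 * ‖d‖ ^ 2) (β * t * ‖d‖ ^ 2) t :=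
      (((hasDerivAt_pow 2 t).const_mul (β / 2)).mul_const _).congr_deriv
        (by rw [Nat.cast_ofNat, show 2 - 1 = 1 from rfl]; ring)
    exact (hline.sub hlin).sub hsq
  have hg' : ∀ t ∈ interior (Icc (0 : ℝ) 1),
      ⟪f' (u + t • d), d⟫ - ⟪f' u, d⟫ - β * t * ‖d‖ ^ 2 ≤ 0 := by
    intro t ht
    rw [interior_Icc] at ht
    calc ⟪f' (u + t • d), d⟫ - ⟪f' u, d⟫ - β * t * ‖d‖ ^ 2
        = ⟪f' (u + t • d) - f' u, d⟫ - β * t * ‖d‖ ^ 2 := by rw [inner_sub_left]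
      _ ≤ β * ‖u + t • d - u‖ * ‖d‖ - β * t * ‖d‖ ^ 2 := by
        gcongr
        exact (real_inner_le_norm _ _).trans
          (mul_le_mul_of_nonneg_right (hlip _ _) (norm_nonneg d))
      _ = 0 := by
        rw [add_sub_cancel_left, norm_smul, Real.norm_of_nonneg ht.1.le]
        ring
  have hanti : AntitoneOn g (Icc 0 1) :=
    antitoneOn_of_hasDerivWithinAt_nonpos (convex_Icc 0 1)
      (fun t _ => (hg t).continuousAt.continuousWithinAt) (fun t _ => (hg t).hasDerivWithinAt) hg'
  have h01 := hanti (left_mem_Icc.2 zero_le_one) (right_mem_Icc.2 zero_le_one) zero_le_one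
  simp only [g, d, zero_smul, add_zero, one_smul, add_sub_cancel] at h01
  linarith

theorem eq_add_smul_of_isMin_prox [CompleteSpace E] {f : E → ℝ} {f' y w : E} {γ : ℝ}
    (hγ : γ ≠ 0) (hf : HasGradientAt f f' y)
    (hmin : ∀ u, f y + ‖y - w‖ ^ 2 / (2 * γ) ≤ f u + ‖u - w‖ ^ 2 / (2 * γ)) :
    w = y + γ • f' := by
  set d := y + γ • f' - w
  have hline : HasDerivAt (fun t : ℝ => f (y + t • d) + ‖y + t • d - w‖ ^ 2 / (2 * γ))
      (⟪f', d⟫ + 2 * ⟪y - w, d⟫ / (2 * γ)) 0 := by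
    refine (HasGradientAt.hasDerivAt_add_smul ?_).add (HasDerivAt.div_const ?_ _)
    · simpa using hf
    · simpa using ((hasDerivAt_add_smul y d 0).sub_const w).norm_sq
  have hmin0 : IsLocalMin (fun t : ℝ => f (y + t • d) + ‖y + t • d - w‖ ^ 2 / (2 * γ)) 0 :=
    Filter.Eventually.of_forall fun t => by simpa using hmin (y + t • d)
  have hd : ⟪d, d⟫ = 0 := by
    have h0 := hmin0.hasDerivAt_eq_zero hline
    have hd : d = γ • f' + (y - w) := by simp only [d]; abel
    rw [hd] at h0 ⊢
    simp only [inner_add_left, real_inner_smul_left] at h0 ⊢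
    field_simp at h0
    linear_combination h0
  exact (sub_eq_zero.1 (inner_self_eq_zero.1 hd)).symm

theorem norm_sub_sub_smul_sq_div {γ : ℝ} (hγ : γ ≠ 0) (v p g : E) :
    ‖v - (p - γ • g)‖ ^ 2 / (2 * γ) = ‖v - p‖ ^ 2 / (2 * γ) + ⟪g, v - p⟫ + γ / 2 * ‖g‖ ^ 2 := by
  rw [sub_sub_eq_add_sub, add_sub_right_comm, norm_add_sq_real, norm_smul, real_inner_smul_right,
    Real.norm_eq_abs, mul_pow, sq_abs, real_inner_comm]
  field_simp

theorem two_mul_inner_le_norm_sq_add_norm_sq (a b : E) : 2 * ⟪a, b⟫ ≤ ‖a‖ ^ 2 + ‖b‖ ^ 2 := by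
  nlinarith [norm_sub_sq_real a b, sq_nonneg ‖a - b‖]

theorem mul_inner_sub_inner_add_smul_le (γ : ℝ) (u v d δ : E) :
    γ * ⟪u, δ⟫ - ⟪v, d + γ • δ⟫
      ≤ 1 / 2 * ‖u‖ ^ 2 + ‖v‖ ^ 2 + 1 / 2 * ‖d‖ ^ 2 + γ ^ 2 * ‖δ‖ ^ 2 := by
  have h₁ := two_mul_inner_le_norm_sq_add_norm_sq u (γ • δ)
  have h₂ := two_mul_inner_le_norm_sq_add_norm_sq (-v) d
  have h₃ := two_mul_inner_le_norm_sq_add_norm_sq (-v) (γ • δ)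
  simp only [inner_neg_left, real_inner_smul_right, norm_neg, norm_smul, mul_pow,
    Real.norm_eq_abs, sq_abs] at h₁ h₂ h₃
  rw [inner_add_right, real_inner_smul_right]
  linear_combination (h₁ + h₂ + h₃) / 2

end Calculus

section Remainder

variable {E : Type*} [NormedAddCommGroup E] [InnerProductSpace ℝ E] [CompleteSpace E]
  {F H : E → ℝ} {F' H' : E → E} {γ L l β : ℝ}

theorem lambda0_le (hγ : 0 < γ) (hβ : 0 ≤ β) (hβ1 : β ≤ 1) :
    lambda0 γ L l β ≤ 1 / (2 * γ) - 1 / 2 - l / 2 - β / 2 - (γ + γ ^ 2) * L ^ 2 - γ * β * L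
      - (3 * γ + 2) * (l + L) := by
  have hgap : 0 ≤ β * (1 - γ * L) ^ 2 + (1 - β) * (γ * L) ^ 2 := by
    have : 0 ≤ 1 - β := by linarith
    positivity
  have hΛ : lambda0 γ L l β = 1 / (2 * γ) - 1 / 2 - l / 2 - β - (3 * γ ^ 2 / 2 + γ) * L ^ 2
      - (3 * γ + 2) * (l + L) := by
    unfold lambda0
    field_simp
    ring
  linear_combination hΛ + hgap / 2

theorem descent_remainder_le (hγ : 0 < γ) (hβ : 0 ≤ β) (hβ1 : β ≤ 1)
    (hFdiff : ∀ u, HasGradientAt F (F' u) u) (hFlip : ∀ u v, ‖F' u - F' v‖ ≤ L * ‖u - v‖)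
    (hFconv : ConvexOn ℝ univ fun u => F u + l / 2 * ‖u‖ ^ 2)
    (hHdiff : ∀ u, HasGradientAt H (H' u) u) (hHlip : ∀ u v, ‖H' u - H' v‖ ≤ β * ‖u - v‖)
    (y yp : E) :
    (F yp - F y - ⟪F' yp, yp - y⟫) + (H yp - H y - ⟪H' y, yp - y⟫)
      + (γ + γ ^ 2) * ‖F' yp - F' y‖ ^ 2 + γ * ⟪H' yp - H' y, F' yp - F' y⟫
      + (lambda0 γ L l β + 1 / 2) * ‖yp - y‖ ^ 2 ≤ ‖yp - y‖ ^ 2 / (2 * γ) := by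
  set d := yp - y
  set δ := F' yp - F' y
  have hF : F yp - F y - ⟪F' yp, d⟫ ≤ l / 2 * ‖d‖ ^ 2 := by
    have hgrad := add_inner_sub_le_of_convexOn_add_norm_sq hFconv (hFdiff yp) y
    rw [← neg_sub yp y, inner_neg_right, norm_neg] at hgrad
    linarith
  have hH : H yp - H y - ⟪H' y, d⟫ ≤ β / 2 * ‖d‖ ^ 2 := by
    linarith [le_add_inner_sub_add_of_lipschitz hHdiff hHlip y yp]
  have hδ : ‖δ‖ ≤ L * ‖d‖ := hFlip yp y
  have hδsq : ‖δ‖ ^ 2 ≤ L ^ 2 * ‖d‖ ^ 2 := by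
    rw [← mul_pow]
    exact pow_le_pow_left₀ (norm_nonneg δ) hδ 2
  -- `l ≥ -L` whenever `d ≠ 0`: `⟪δ, d⟫` is squeezed between `-l ‖d‖²` and `L ‖d‖²`.
  have hlL : 0 ≤ (l + L) * ‖d‖ ^ 2 := by
    have hmono := neg_mul_norm_sq_le_inner_sub_of_convexOn_add_norm_sq hFconv hFdiff y yp
    have hδd := (real_inner_le_norm δ d).trans (mul_le_mul_of_nonneg_right hδ (norm_nonneg d))
    nlinarith
  have hHδ : ⟪H' yp - H' y, δ⟫ ≤ β * L * ‖d‖ ^ 2 := by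
    have hcs := (real_inner_le_norm _ _).trans
      (mul_le_mul (hHlip yp y) hδ (norm_nonneg δ) (by positivity))
    linarith
  have hΛ := mul_le_mul_of_nonneg_right (lambda0_le (L := L) (l := l) hγ hβ hβ1)
    (sq_nonneg ‖d‖)
  have hHδ' := mul_le_mul_of_nonneg_left hHδ hγ.le
  have hδsq' := mul_le_mul_of_nonneg_left hδsq (by positivity : 0 ≤ γ + γ ^ 2)
  have hlL' := mul_le_mul_of_nonneg_left hlL (by positivity : 0 ≤ 3 * γ + 2)
  linear_combination hF + hH + hHδ' + hδsq' + hlL' + hΛ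

end Remainder

section Merit

variable {n : ℕ} {F G H : EuclideanSpace ℝ (Fin n) → ℝ}
  {H' : EuclideanSpace ℝ (Fin n) → EuclideanSpace ℝ (Fin n)} {γ : ℝ}

theorem merit_add_inner_le_of_isMin_prox (hγ : γ ≠ 0) {x yp zp gp : EuclideanSpace ℝ (Fin n)}
    (hzp : ∀ u, G zp + ‖zp - ((2:ℝ) • yp - γ • gp - x)‖ ^ 2 / (2*γ)
        ≤ G u + ‖u - ((2:ℝ) • yp - γ • gp - x)‖ ^ 2 / (2*γ))
    (u : EuclideanSpace ℝ (Fin n)) :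
    merit F G H H' γ (x + zp - yp) yp zp + ⟪gp - H' yp, zp - yp⟫
      ≤ F yp + H yp + G u + ‖u - ((2:ℝ) • yp - x)‖ ^ 2 / (2*γ) - ‖yp - x‖ ^ 2 / (2*γ)
        + ⟪gp, u - yp⟫ := by
  set p := (2:ℝ) • yp - x
  have hmin := hzp u
  rw [show (2:ℝ) • yp - γ • gp - x = p - γ • gp by simp only [p]; abel,
    norm_sub_sub_smul_sq_div hγ, norm_sub_sub_smul_sq_div hγ] at hmin
  have hxp : yp - (x + zp - yp) = -(zp - p) := by simp only [p]; module
  have hgp : ⟪H' yp, zp - yp⟫ + ⟪gp - H' yp, zp - yp⟫ = ⟪gp, zp - p⟫ + ⟪gp, p - yp⟫ := by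
    rw [← inner_add_left, add_sub_cancel, ← inner_add_right, sub_add_sub_cancel]
  have hzp' : zp - (x + zp - yp) = yp - x := by abel
  have hu : ⟪gp, u - yp⟫ = ⟪gp, u - p⟫ + ⟪gp, p - yp⟫ := by
    rw [← inner_add_right, sub_add_sub_cancel]
  unfold merit
  rw [hxp, hzp', norm_neg, hu]
  linarith

-- `a` and `b` stand for `∇F(y⁺)` and `∇F(y)`, so that `x = y⁺ + γ a` and `z = y⁺ + γ (a - b)`.
theorem merit_succ_add_inner_le (hγ : γ ≠ 0) {y yp zp gp a b : EuclideanSpace ℝ (Fin n)}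
    (hzp : ∀ u, G zp + ‖zp - ((2:ℝ) • yp - γ • gp - (yp + γ • a))‖ ^ 2 / (2*γ)
        ≤ G u + ‖u - ((2:ℝ) • yp - γ • gp - (yp + γ • a))‖ ^ 2 / (2*γ)) :
    merit F G H H' γ (yp + γ • a + zp - yp) yp zp + ⟪gp - H' yp, zp - yp⟫
      ≤ merit F G H H' γ (yp + γ • a) y (yp + γ • (a - b))
        + (F yp - F y - ⟪a, yp - y⟫) + (H yp - H y - ⟪H' y, yp - y⟫) - ‖yp - y‖ ^ 2 / (2 * γ)
        + γ * ‖a - b‖ ^ 2 + γ * ⟪gp - H' yp, a - b⟫ + γ * ⟪H' yp - H' y, a - b⟫ := by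
  refine (merit_add_inner_le_of_isMin_prox hγ hzp (yp + γ • (a - b))).trans_eq ?_
  unfold merit
  simp only [← real_inner_self_eq_norm_sq, inner_add_left, inner_add_right, inner_sub_left,
    inner_sub_right, real_inner_smul_right, real_inner_comm]
  field_simp
  ring

end Merit

theorem stmt_6_general {n : ℕ}
    (F G H : EuclideanSpace ℝ (Fin n) → ℝ)
    (F' H' : EuclideanSpace ℝ (Fin n) → EuclideanSpace ℝ (Fin n))
    (γ L l β : ℝ) (hγ : 0 < γ) (hβ : 0 < β) (hβ1 : β ≤ 1)
    (hFdiff : ∀ u, HasGradientAt F (F' u) u)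
    (hFlip : ∀ u v, ‖F' u - F' v‖ ≤ L * ‖u - v‖)
    (hFconv : ConvexOn ℝ Set.univ (fun u => F u + (l/2) * ‖u‖ ^ 2))
    (hHdiff : ∀ u, HasGradientAt H (H' u) u)
    (hHlip : ∀ u v, ‖H' u - H' v‖ ≤ β * ‖u - v‖)
    (w x xp y yp z zp g gp : EuclideanSpace ℝ (Fin n))
    (hy : ∀ u, F y + ‖y - w‖ ^ 2 / (2*γ) ≤ F u + ‖u - w‖ ^ 2 / (2*γ))
    (hx : x = w + z - y)
    (hyp : ∀ u, F yp + ‖yp - x‖ ^ 2 / (2*γ) ≤ F u + ‖u - x‖ ^ 2 / (2*γ))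
    (hzp : ∀ u, G zp + ‖zp - ((2:ℝ) • yp - γ • gp - x)‖ ^ 2 / (2*γ)
        ≤ G u + ‖u - ((2:ℝ) • yp - γ • gp - x)‖ ^ 2 / (2*γ))
    (hxp : xp = x + zp - yp) :
    merit F G H H' γ xp yp zp + lambda0 γ L l β * ‖yp - y‖ ^ 2
      ≤ merit F G H H' γ x y z
        + ⟪g - H' y, z - y⟫ - ⟪gp - H' yp, zp - yp⟫
        + (1/2) * ‖gp - H' yp‖ ^ 2 + ‖g - H' y‖ ^ 2 := by
  obtain rfl : w = y + γ • F' y := eq_add_smul_of_isMin_prox hγ.ne' (hFdiff y) hy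
  obtain rfl : x = yp + γ • F' yp := eq_add_smul_of_isMin_prox hγ.ne' (hFdiff yp) hyp
  obtain rfl : z = yp + γ • (F' yp - F' y) := by
    rw [smul_sub, ← add_sub_assoc, hx]
    abel
  subst hxp
  have hstep := merit_succ_add_inner_le (F := F) (H := H) (H' := H') (y := y) (b := F' y)
    hγ.ne' hzp
  have hrem := descent_remainder_le hγ hβ.le hβ1 hFdiff hFlip hFconv hHdiff hHlip y yp
  have herr := mul_inner_sub_inner_add_smul_le γ (gp - H' yp) (g - H' y) (yp - y) (F' yp - F' y)
  rw [add_sub_right_comm yp (γ • (F' yp - F' y)) y]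
  linear_combination hstep + hrem + herr

/-- The pathwise one-step recursion from the proof of Theorem 3.1 of the paper. -/
theorem stmt_6 {n : ℕ}
    (F G H : EuclideanSpace ℝ (Fin n) → ℝ)
    (F' H' : EuclideanSpace ℝ (Fin n) → EuclideanSpace ℝ (Fin n))
    (γ L l β : ℝ) (hγ : 0 < γ) (hL : 0 < L) (hβ : 0 < β) (hβ1 : β ≤ 1)
    (hFdiff : ∀ u, HasGradientAt F (F' u) u)
    (hFlip : ∀ u v, ‖F' u - F' v‖ ≤ L * ‖u - v‖)
    (hFconv : ConvexOn ℝ Set.univ (fun u => F u + (l/2) * ‖u‖ ^ 2))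
    (hG : LowerSemicontinuous G)
    (hHdiff : ∀ u, HasGradientAt H (H' u) u)
    (hHlip : ∀ u v, ‖H' u - H' v‖ ≤ β * ‖u - v‖)
    (w x xp y yp z zp g gp : EuclideanSpace ℝ (Fin n))
    (hy : ∀ u, F y + ‖y - w‖ ^ 2 / (2*γ) ≤ F u + ‖u - w‖ ^ 2 / (2*γ))
    (hz : ∀ u, G z + ‖z - ((2:ℝ) • y - γ • g - w)‖ ^ 2 / (2*γ)
        ≤ G u + ‖u - ((2:ℝ) • y - γ • g - w)‖ ^ 2 / (2*γ))
    (hx : x = w + z - y)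
    (hyp : ∀ u, F yp + ‖yp - x‖ ^ 2 / (2*γ) ≤ F u + ‖u - x‖ ^ 2 / (2*γ))
    (hzp : ∀ u, G zp + ‖zp - ((2:ℝ) • yp - γ • gp - x)‖ ^ 2 / (2*γ)
        ≤ G u + ‖u - ((2:ℝ) • yp - γ • gp - x)‖ ^ 2 / (2*γ))
    (hxp : xp = x + zp - yp) :
    merit F G H H' γ xp yp zp + lambda0 γ L l β * ‖yp - y‖ ^ 2
      ≤ merit F G H H' γ x y z
        + ⟪g - H' y, z - y⟫ - ⟪gp - H' yp, zp - yp⟫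
        + (1/2) * ‖gp - H' yp‖ ^ 2 + ‖g - H' y‖ ^ 2 :=
  stmt_6_general F G H F' H' γ L l β hγ hβ hβ1 hFdiff hFlip hFconv hHdiff hHlip w x xp y yp z zp g
    gp hy hx hyp hzp hxp
end

section
/- Suppose F, H : ℝⁿ → ℝ are differentiable, ∇F is L-Lipschitz, ∇H is β-Lipschitz, and γ > 0. Let w, x, y, y⁺, z ∈ ℝⁿ and g ∈ ℝⁿ satisfy ∇F(y) + (1/γ)(y − w) = 0, x = w + z − y, and ∇F(y⁺) + (1/γ)(y⁺ − x) = 0. Define the stationarity residual v := (1/γ)(y − z) + (∇F(z) − ∇F(y)) + (∇H(z) − ∇H(y)) + (∇H(y) − g). Then ‖v‖ ≤ (1/γ + L + β)(1 + γL)‖y⁺ − y‖ + ‖∇H(y) − g‖. -/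
/-- Bound on the stationarity residual exhibited in the proof of Theorem 3.1. -/
theorem stmt_7 {n : ℕ}
    (F H : EuclideanSpace ℝ (Fin n) → ℝ)
    (F' H' : EuclideanSpace ℝ (Fin n) → EuclideanSpace ℝ (Fin n))
    (L β γ : ℝ) (hL : 0 < L) (hβ : 0 < β) (hγ : 0 < γ)
    (hFdiff : ∀ u, HasGradientAt F (F' u) u)
    (hFlip : ∀ u v, ‖F' u - F' v‖ ≤ L * ‖u - v‖)
    (hHdiff : ∀ u, HasGradientAt H (H' u) u)
    (hHlip : ∀ u v, ‖H' u - H' v‖ ≤ β * ‖u - v‖)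
    (w x y yp z g : EuclideanSpace ℝ (Fin n))
    (hopt : F' y + (1/γ) • (y - w) = 0)
    (hx : x = w + z - y)
    (hoptp : F' yp + (1/γ) • (yp - x) = 0) :
    ‖(1/γ) • (y - z) + (F' z - F' y) + (H' z - H' y) + (H' y - g)‖
      ≤ (1/γ + L + β) * (1 + γ * L) * ‖yp - y‖ + ‖H' y - g‖ := by
  have hγ' : (1:ℝ)/γ > 0 := by positivity
  have h1 : F' yp - F' y = (1/γ) • (z - yp) := by
    have e1 : F' y = (1/γ) • (w - y) := by
      have := hopt
      have : F' y = -((1/γ) • (y - w)) := by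
        rw [eq_neg_iff_add_eq_zero]; exact hopt
      rw [this, ← smul_neg, neg_sub]
    have e2 : F' yp = (1/γ) • (x - yp) := by
      have : F' yp = -((1/γ) • (yp - x)) := by
        rw [eq_neg_iff_add_eq_zero]; exact hoptp
      rw [this, ← smul_neg, neg_sub]
    rw [e1, e2, hx]
    module
  have hzyp : ‖z - yp‖ ≤ γ * L * ‖yp - y‖ := by
    have hn : ‖F' yp - F' y‖ = (1/γ) * ‖z - yp‖ := by
      rw [h1, norm_smul, Real.norm_eq_abs, abs_of_pos hγ']
    have := hFlip yp y
    rw [hn] at this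
    calc ‖z - yp‖ = γ * ((1/γ) * ‖z - yp‖) := by field_simp
      _ ≤ γ * (L * ‖yp - y‖) := by
          exact mul_le_mul_of_nonneg_left this (le_of_lt hγ)
      _ = γ * L * ‖yp - y‖ := by ring
  have hzy : ‖z - y‖ ≤ (1 + γ * L) * ‖yp - y‖ := by
    calc ‖z - y‖ = ‖(z - yp) + (yp - y)‖ := by abel_nf
      _ ≤ ‖z - yp‖ + ‖yp - y‖ := norm_add_le _ _
      _ ≤ γ * L * ‖yp - y‖ + ‖yp - y‖ := by linarith
      _ = (1 + γ * L) * ‖yp - y‖ := by ring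
  have tri : ‖(1/γ) • (y - z) + (F' z - F' y) + (H' z - H' y) + (H' y - g)‖
      ≤ (1/γ) * ‖z - y‖ + ‖F' z - F' y‖ + ‖H' z - H' y‖ + ‖H' y - g‖ := by
    have hs : ‖(1/γ) • (y - z)‖ = (1/γ) * ‖z - y‖ := by
      rw [norm_smul, Real.norm_eq_abs, abs_of_pos hγ', norm_sub_rev]
    calc ‖(1/γ) • (y - z) + (F' z - F' y) + (H' z - H' y) + (H' y - g)‖
        ≤ ‖(1/γ) • (y - z) + (F' z - F' y) + (H' z - H' y)‖ + ‖H' y - g‖ :=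
          norm_add_le _ _
      _ ≤ ‖(1/γ) • (y - z) + (F' z - F' y)‖ + ‖H' z - H' y‖ + ‖H' y - g‖ := by
          have := norm_add_le ((1/γ) • (y - z) + (F' z - F' y)) (H' z - H' y)
          linarith
      _ ≤ ‖(1/γ) • (y - z)‖ + ‖F' z - F' y‖ + ‖H' z - H' y‖ + ‖H' y - g‖ := by
          have := norm_add_le ((1/γ) • (y - z)) (F' z - F' y)
          linarith
      _ = (1/γ) * ‖z - y‖ + ‖F' z - F' y‖ + ‖H' z - H' y‖ + ‖H' y - g‖ := by
          rw [hs]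
  have hF := hFlip z y
  have hH := hHlip z y
  have hyp : (0:ℝ) ≤ ‖yp - y‖ := norm_nonneg _
  have hzy0 : (0:ℝ) ≤ ‖z - y‖ := norm_nonneg _
  nlinarith [mul_le_mul_of_nonneg_left hzy (le_of_lt hγ'),
    mul_le_mul_of_nonneg_left hzy (le_of_lt hL),
    mul_le_mul_of_nonneg_left hzy (le_of_lt hβ)]
end

section
/- Suppose F : ℝⁿ → ℝ is differentiable with L-Lipschitz gradient (L > 0), H : ℝⁿ → ℝ is twice continuously differentiable with uniformly bounded Hessian, ‖∇²H(u)‖ ≤ M for all u (operator norm), and γ > 0. Let w, x, y, y⁺, z ∈ ℝⁿ and g ∈ ℝⁿ satisfy ∇F(y) + (1/γ)(y − w) = 0, x = w + z − y, and ∇F(y⁺) + (1/γ)(y⁺ − x) = 0. Then the following three bounds hold: (i) ‖(1/γ)(z − y)‖ ≤ ((1 + γL)/γ)‖y⁺ − y‖; (ii) ‖(1/γ)(w − x) + (1/γ)(z − y) + ∇²H(y)(z − y)‖ ≤ (2/γ + M)(1 + γL)‖y⁺ − y‖; (iii) ‖(1 + 2/γ)(y − z) + (1/γ)(x − w) + ∇H(y)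 − g‖ ≤ (1 + 3/γ)(1 + γL)‖y⁺ − y‖ + ‖∇H(y) − g‖. -/
/-- Lemma A.6 of the paper (subgradient component bounds): the three components
`ξ_x, ξ_y, ξ_z` of the explicit subgradient of the merit function are bounded in
terms of `‖y⁺ − y‖` and the gradient-estimation error. -/
theorem stmt_12 {n : ℕ}
    (F H : EuclideanSpace ℝ (Fin n) → ℝ)
    (F' H' : EuclideanSpace ℝ (Fin n) → EuclideanSpace ℝ (Fin n))
    (H'' : EuclideanSpace ℝ (Fin n) →
      EuclideanSpace ℝ (Fin n) →L[ℝ] EuclideanSpace ℝ (Fin n))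
    (L M γ : ℝ) (hL : 0 < L) (hγ : 0 < γ)
    (hFdiff : ∀ u, HasGradientAt F (F' u) u)
    (hFlip : ∀ u v, ‖F' u - F' v‖ ≤ L * ‖u - v‖)
    (hHdiff : ∀ u, HasGradientAt H (H' u) u)
    (hHess : ∀ u, HasFDerivAt H' (H'' u) u)
    (hHessCont : Continuous H'')
    (hM : ∀ u, ‖H'' u‖ ≤ M)
    (w x y yp z g : EuclideanSpace ℝ (Fin n))
    (hopt : F' y + (1/γ) • (y - w) = 0)
    (hx : x = w + z - y)
    (hoptp : F' yp + (1/γ) • (yp - x) = 0) :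
    ‖(1/γ) • (z - y)‖ ≤ ((1 + γ*L)/γ) * ‖yp - y‖ ∧
    ‖(1/γ) • (w - x) + (1/γ) • (z - y) + H'' y (z - y)‖
      ≤ (2/γ + M) * (1 + γ*L) * ‖yp - y‖ ∧
    ‖(1 + 2/γ) • (y - z) + (1/γ) • (x - w) + H' y - g‖
      ≤ (1 + 3/γ) * (1 + γ*L) * ‖yp - y‖ + ‖H' y - g‖ := by

  have hγ' : (0:ℝ) < 1/γ := by positivity
  have hd : z - y = x - w := by rw [hx]; abel
  have key : (1/γ) • (x - w) = (F' yp - F' y) + (1/γ) • (yp - y) := by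
    have h := hoptp
    have h2 := hopt
    have h3 : (F' yp + (1/γ) • (yp - x)) - (F' y + (1/γ) • (y - w)) = 0 := by
      rw [h, h2]; abel
    linear_combination (norm := module) (-1 : ℝ) • h3
  have hM0 : 0 ≤ M := le_trans (norm_nonneg _) (hM y)
  have hb : ‖(1/γ) • (x - w)‖ ≤ ((1 + γ*L)/γ) * ‖yp - y‖ := by
    rw [key]
    calc ‖(F' yp - F' y) + (1/γ) • (yp - y)‖
        ≤ ‖F' yp - F' y‖ + ‖(1/γ) • (yp - y)‖ := norm_add_le _ _
      _ ≤ L * ‖yp - y‖ + (1/γ) * ‖yp - y‖ := by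
          have h1 := hFlip yp y
          have h2 : ‖(1/γ) • (yp - y)‖ = (1/γ) * ‖yp - y‖ := by
            rw [norm_smul, Real.norm_eq_abs, abs_of_pos hγ']
          linarith
      _ = ((1 + γ*L)/γ) * ‖yp - y‖ := by field_simp; ring
  have hxw : ‖x - w‖ ≤ (1 + γ*L) * ‖yp - y‖ := by
    have h2 : ‖(1/γ) • (x - w)‖ = (1/γ) * ‖x - w‖ := by
      rw [norm_smul, Real.norm_eq_abs, abs_of_pos hγ']
    rw [h2] at hb
    have := mul_le_mul_of_nonneg_left hb (le_of_lt hγ)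
    calc ‖x - w‖ = γ * ((1/γ) * ‖x - w‖) := by field_simp
      _ ≤ γ * (((1 + γ*L)/γ) * ‖yp - y‖) := this
      _ = (1 + γ*L) * ‖yp - y‖ := by field_simp
  have hyy : 0 ≤ ‖yp - y‖ := norm_nonneg _
  refine ⟨?_, ?_, ?_⟩
  · rw [hd]; exact hb
  · have he : (1/γ) • (w - x) + (1/γ) • (z - y) + H'' y (z - y) = H'' y (z - y) := by
      rw [hd]; module
    rw [he]
    calc ‖H'' y (z - y)‖ ≤ ‖H'' y‖ * ‖z - y‖ := (H'' y).le_opNorm _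
      _ ≤ M * ((1 + γ*L) * ‖yp - y‖) := by
          rw [hd]; exact mul_le_mul (hM y) hxw (norm_nonneg _) hM0
      _ ≤ (2/γ + M) * (1 + γ*L) * ‖yp - y‖ := by
          have h1γL : (0:ℝ) ≤ 1 + γ*L := by positivity
          nlinarith [mul_nonneg (mul_nonneg (by positivity : (0:ℝ) ≤ 2/γ) h1γL) hyy]
  · have he : (1 + 2/γ) • (y - z) + (1/γ) • (x - w) + H' y - g
        = (1 + 1/γ) • (w - x) + (H' y - g) := by
      have hd' : y - z = w - x := by rw [hx]; abel
      rw [hd']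
      have : (2:ℝ)/γ = 1/γ + 1/γ := by ring
      rw [this]; module
    rw [he]
    calc ‖(1 + 1/γ) • (w - x) + (H' y - g)‖
        ≤ ‖(1 + 1/γ) • (w - x)‖ + ‖H' y - g‖ := norm_add_le _ _
      _ ≤ (1 + 3/γ) * (1 + γ*L) * ‖yp - y‖ + ‖H' y - g‖ := by
          have h2 : ‖(1 + 1/γ) • (w - x)‖ = (1 + 1/γ) * ‖w - x‖ := by
            rw [norm_smul, Real.norm_eq_abs, abs_of_pos (by positivity)]
          have hwx : ‖w - x‖ = ‖x - w‖ := by rw [norm_sub_rev]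
          rw [h2, hwx]
          have h3 : (1 + 1/γ) * ‖x - w‖ ≤ (1 + 1/γ) * ((1 + γ*L) * ‖yp - y‖) :=
            mul_le_mul_of_nonneg_left hxw (by positivity)
          have h4 : (1 + 1/γ) * ((1 + γ*L) * ‖yp - y‖)
              ≤ (1 + 3/γ) * (1 + γ*L) * ‖yp - y‖ := by
            have h5 : (1:ℝ) + 1/γ ≤ 1 + 3/γ := by
              have : (1:ℝ)/γ ≤ 3/γ := by gcongr; norm_num
              linarith
            have h6 : (0:ℝ) ≤ (1 + γ*L) * ‖yp - y‖ :=
              mul_nonneg (by positivity) hyy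
            calc (1 + 1/γ) * ((1 + γ*L) * ‖yp - y‖)
                ≤ (1 + 3/γ) * ((1 + γ*L) * ‖yp - y‖) :=
                  mul_le_mul_of_nonneg_right h5 h6
              _ = (1 + 3/γ) * (1 + γ*L) * ‖yp - y‖ := by ring
          linarith
end

section
/- Let G : ℝⁿ → ℝ be lower semicontinuous and γ > 0. Suppose (w_k) and (z_k) are sequences in ℝⁿ with w_k → w* and z_k → z*, and that for every k, z_k is a global minimizer of z ↦ G(z) + (1/(2γ))‖z − w_k‖². Then G(z_k) → G(z*). -/
open Filter Topology

/-- Continuity of the values of a lower semicontinuous function `G` along proximal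
sequences (from the proof of Lemma A.6 of the paper). -/
theorem stmt_13 {n : ℕ}
    (G : EuclideanSpace ℝ (Fin n) → ℝ)
    (γ : ℝ) (hγ : 0 < γ)
    (hG : LowerSemicontinuous G)
    (w z : ℕ → EuclideanSpace ℝ (Fin n))
    (wstar zstar : EuclideanSpace ℝ (Fin n))
    (hw : Tendsto w atTop (𝓝 wstar))
    (hz : Tendsto z atTop (𝓝 zstar))
    (hmin : ∀ k, ∀ u, G (z k) + (1/(2*γ)) * ‖z k - w k‖ ^ 2
        ≤ G u + (1/(2*γ)) * ‖u - w k‖ ^ 2) :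
    Tendsto (fun k => G (z k)) atTop (𝓝 (G zstar)) := by
  have h1 : Tendsto (fun k => ‖zstar - w k‖ ^ 2) atTop (𝓝 (‖zstar - wstar‖ ^ 2)) :=
    ((tendsto_const_nhds.sub hw).norm.pow 2)
  have h2 : Tendsto (fun k => ‖z k - w k‖ ^ 2) atTop (𝓝 (‖zstar - wstar‖ ^ 2)) :=
    ((hz.sub hw).norm.pow 2)
  have hwz : Tendsto (fun k => (1/(2*γ)) * (‖zstar - w k‖ ^ 2 - ‖z k - w k‖ ^ 2))
      atTop (𝓝 0) := by
    have := (h1.sub h2).const_mul (1/(2*γ))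
    simpa using this
  refine tendsto_order.2 ⟨fun a ha => hz.eventually (hG zstar a ha), fun b hb => ?_⟩
  have h0 : ∀ᶠ k in atTop,
      (1/(2*γ)) * (‖zstar - w k‖ ^ 2 - ‖z k - w k‖ ^ 2) < b - G zstar :=
    hwz.eventually_lt_const (by linarith)
  filter_upwards [h0] with k hk
  have hm := hmin k zstar
  have hms : (1/(2*γ)) * (‖zstar - w k‖ ^ 2 - ‖z k - w k‖ ^ 2)
      = (1/(2*γ)) * ‖zstar - w k‖ ^ 2 - (1/(2*γ)) * ‖z k - w k‖ ^ 2 :=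
    mul_sub _ _ _
  linarith
end
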